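/- For every even n ≥ 4, the only vertex-transitive connected finite graphs G satisfying Υ_sym(sr_n, G) = (n+2) · Υ(sr_n, G) > 0 are the complete graph K_{n+2} and the graph K'_{n+2} (the complete graph K_{n+2} minus a perfect matching). -/

import Mathlib

/-!
Since `Υ_sym(sr_n, G) > 0`, `G` contains a copy `f` of `sr_n`, and vertex-transitivity forces
every `Aut G`-invariant cover to be all of `V`; hence `|V| = (n + 2)·|X|` for a minimum cover `X`.
Each copy `g ∘ f` (`g ∈ Aut G`) meets `X`, and on average it meets `X` exactly once, so every
copy of `sr_n` meets `X` in exactly one vertex.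

Suppose `|X| ≥ 2`. A star with a tail can then be routed through any two vertices of `X` at
distance at most three, so the closed neighbourhoods of `X` are disjoint and the common degree
`d` satisfies `n ≤ d ≤ n + 1`. If `d = n + 1` they partition `V`, and as the vertices of `X` are
even at distance at least four, each of them is closed under adjacency. If `d = n`, every vertex
at distance two from a vertex `v` outside all of them lies in `X`; so each neighbour of `v` has
at most one neighbour at distance two from `v`, a property that vertex-transitivity transfers to
every vertex. This forces `N(x) = N(v)` for such an `x ∈ X`, so `{v, x} ∪ N(v)` is closed under
adjacency. In both cases connectivity gives `|V| ≤ n + 2`, a contradiction; hence `|V| = n + 2`.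
Then `d = n + 1` gives `K_{n+2}`, while for `d = n` non-adjacency pairs up the vertices, which
gives `K'_{n+2}`.
-/

/-- `X` meets every subgraph of `Γ` isomorphic to `K`. -/
def KCover {W V : Type} (K : SimpleGraph W) (Γ : SimpleGraph V) (X : Set V) : Prop :=
  ∀ f : K →g Γ, Function.Injective f → ∃ w : W, f w ∈ X

/-- `X` is invariant under all automorphisms of `Γ`. -/
def AutInvariant {V : Type} (Γ : SimpleGraph V) (X : Set V) : Prop :=
  ∀ g : Γ ≃g Γ, (fun v => g v) '' X = X

/-- The vertex representativity `Υ(K, Γ)`. -/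
noncomputable def upsilon {W V : Type} (K : SimpleGraph W) (Γ : SimpleGraph V) : ℕ :=
  sInf {m | ∃ X : Set V, X.Finite ∧ Nat.card X = m ∧ KCover K Γ X}

/-- The symmetric vertex representativity `Υ_sym(K, Γ)`. -/
noncomputable def upsilonSym {W V : Type} (K : SimpleGraph W) (Γ : SimpleGraph V) : ℕ :=
  sInf {m | ∃ X : Set V, X.Finite ∧ Nat.card X = m ∧ AutInvariant Γ X ∧ KCover K Γ X}

/-- The `Aut Γ`-orbit of a vertex. -/
def autOrbit {V : Type} (Γ : SimpleGraph V) (v : V) : Set V :=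
  {w | ∃ g : Γ ≃g Γ, g v = w}

/-- The "star with a tail" `sr_d`: the star `K_{1,d}` (centre `0`, leaves `1,…,d`)
with an extra vertex `d+1` joined to the leaf `d`; it has `d+2` vertices. -/
def srGraph (d : ℕ) : SimpleGraph (Fin (d + 2)) :=
  SimpleGraph.fromRel (fun x y =>
    (x.val = 0 ∧ 1 ≤ y.val ∧ y.val ≤ d) ∨ (x.val = d ∧ y.val = d + 1))

/-- `K'_m`: the complete graph on `m` vertices minus a perfect matching
(the matching pairs `2i` with `2i+1`); for even `m` every vertex has degree `m-2`. -/
def kPrime (m : ℕ) : SimpleGraph (Fin m) :=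
  SimpleGraph.fromRel (fun x y => x.val / 2 ≠ y.val / 2)

/-- `G` is vertex-transitive. -/
def VertexTransitive {V : Type} (G : SimpleGraph V) : Prop :=
  ∀ u v : V, ∃ g : G ≃g G, g u = v

open SimpleGraph Finset Function

section Representativity

variable {W V : Type} {K : SimpleGraph W} {G : SimpleGraph V}

lemma exists_injective_hom_of_upsilonSym_pos (h : 0 < upsilonSym K G) :
    ∃ f : K →g G, Injective f := by
  by_contra! hno
  refine h.ne' (Nat.eq_zero_of_le_zero (Nat.sInf_le ?_))
  exact ⟨∅, Set.finite_empty, by simp, fun g => by simp, fun f hf => (hno f hf).elim⟩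

lemma kCover_univ [Nonempty W] : KCover K G Set.univ :=
  fun _ _ => ⟨Classical.arbitrary W, trivial⟩

lemma autInvariant_univ : AutInvariant G Set.univ :=
  fun g => Set.image_univ_of_surjective g.surjective

lemma VertexTransitive.eq_univ_of_kCover (hvt : VertexTransitive G) {X : Set V}
    (hX : AutInvariant G X) (hcov : KCover K G X) {f : K →g G} (hf : Injective f) :
    X = Set.univ := by
  obtain ⟨w, hw⟩ := hcov f hf
  refine Set.eq_univ_of_forall fun v => ?_
  obtain ⟨g, rfl⟩ := hvt (f w) v
  rw [← hX g]
  exact ⟨_, hw, rfl⟩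

lemma VertexTransitive.upsilonSym_eq_card [Finite V] [Nonempty W] (hvt : VertexTransitive G)
    {f : K →g G} (hf : Injective f) : upsilonSym K G = Nat.card V := by
  have hset : {m | ∃ X : Set V, X.Finite ∧ Nat.card X = m ∧ AutInvariant G X ∧ KCover K G X}
      = {Nat.card V} := by
    ext m
    constructor
    · rintro ⟨X, -, rfl, hX, hcov⟩
      rw [hvt.eq_univ_of_kCover hX hcov hf, Set.mem_singleton_iff, Nat.card_univ]
    · rintro rfl
      exact ⟨Set.univ, Set.finite_univ, Nat.card_univ, autInvariant_univ, kCover_univ⟩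
  rw [upsilonSym, hset, csInf_singleton]

lemma exists_kCover_card_eq_upsilon [Finite V] [Nonempty W] :
    ∃ X : Set V, X.Finite ∧ Nat.card X = upsilon K G ∧ KCover K G X :=
  Nat.sInf_mem (s := {m | ∃ X : Set V, X.Finite ∧ Nat.card X = m ∧ KCover K G X})
    ⟨_, Set.univ, Set.finite_univ, rfl, kCover_univ⟩

lemma upsilon_eq_one [Finite W] [Nonempty W] {K G : SimpleGraph W} {f : K →g G}
    (hf : Injective f) : upsilon K G = 1 := by
  have hone : KCover K G {Classical.arbitrary W} :=
    fun _ hf' => Finite.surjective_of_injective hf' _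
  have hmem : 1 ∈ {m | ∃ X : Set W, X.Finite ∧ Nat.card X = m ∧ KCover K G X} :=
    ⟨_, Set.finite_singleton _, Nat.card_unique, hone⟩
  refine le_antisymm (Nat.sInf_le hmem) (Nat.one_le_iff_ne_zero.mpr fun h0 => ?_)
  rcases Nat.sInf_eq_zero.mp h0 with ⟨X, hXfin, hX0, hcov⟩ | hempty
  · obtain ⟨w, hw⟩ := hcov f hf
    rcases Nat.card_eq_zero.mp hX0 with h | h
    · exact h.elim ⟨_, hw⟩
    · exact Set.infinite_coe_iff.mp h hXfin
  · exact Set.eq_empty_iff_forall_notMem.mp hempty 1 hmem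

end Representativity

namespace SimpleGraph

variable {V : Type} {G : SimpleGraph V}

lemma Connected.mem_of_forall_adj_mem (hG : G.Connected) {s : Set V}
    (hs : ∀ a ∈ s, ∀ b, G.Adj a b → b ∈ s) {u : V} (hu : u ∈ s) (v : V) : v ∈ s := by
  obtain ⟨p⟩ := hG.preconnected u v
  induction p with
  | nil => exact hu
  | cons h _ ih => exact ih (hs _ hu _ h)

lemma Connected.card_le_of_forall_adj_mem [Fintype V] (hG : G.Connected) {C : Finset V}
    (hC : ∀ a ∈ C, ∀ b, G.Adj a b → b ∈ C) {u : V} (hu : u ∈ C) : Fintype.card V ≤ #C := by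
  rw [← card_univ]
  exact card_le_card fun v _ => hG.mem_of_forall_adj_mem (s := C) hC hu v

lemma Connected.isUniversal (hG : G.Connected) {u : V}
    (h : ∀ l w, G.Adj u l → G.Adj l w → w ≠ u → G.Adj u w) : G.IsUniversal u := by
  intro v huv
  have hclosed : ∀ a ∈ {v | v = u ∨ G.Adj u v}, ∀ b, G.Adj a b →
      b ∈ {v | v = u ∨ G.Adj u v} := by
    rintro a (rfl | hua) b hab
    · exact Or.inr hab
    · by_cases hbu : b = u
      · exact Or.inl hbu
      · exact Or.inr (h a b hua hab hbu)
  exact (hG.mem_of_forall_adj_mem hclosed (Or.inl rfl) v).resolve_left (Ne.symm huv)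

end SimpleGraph

section VertexTransitive

variable {V : Type} {G : SimpleGraph V}

lemma VertexTransitive.of_iso {W : Type} {H : SimpleGraph W} (e : G ≃g H)
    (hvt : VertexTransitive H) : VertexTransitive G := by
  intro u v
  obtain ⟨g, hg⟩ := hvt (e u) (e v)
  exact ⟨e.trans (g.trans e.symm), by simp [hg]⟩

lemma VertexTransitive.isUniversal (hvt : VertexTransitive G) {u : V} (hu : G.IsUniversal u)
    (v : V) : G.IsUniversal v := by
  obtain ⟨g, rfl⟩ := hvt u v
  intro w hw
  simpa using g.map_adj_iff.mpr (hu (w := g.symm w) fun h => hw (by simp [h]))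

lemma VertexTransitive.isRegularOfDegree [Fintype V] [DecidableRel G.Adj]
    (hvt : VertexTransitive G) (u : V) : G.IsRegularOfDegree (G.degree u) := fun v => by
  obtain ⟨g, rfl⟩ := hvt u v
  exact g.degree_eq u

lemma vertexTransitive_top [DecidableEq V] : VertexTransitive (⊤ : SimpleGraph V) :=
  fun u v => ⟨⟨Equiv.swap u v, by simp⟩, Equiv.swap_apply_left u v⟩

end VertexTransitive

def IsExactCover {W V : Type} (K : SimpleGraph W) (G : SimpleGraph V) (X : Set V) : Prop :=
  ∀ f : K →g G, Injective f → ∃! w, f w ∈ X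

lemma finite_iso_self {V : Type} [Finite V] (G : SimpleGraph V) : Finite (G ≃g G) :=
  Finite.of_injective _ RelIso.toEquiv_injective

section Averaging

variable {V : Type} [DecidableEq V] {G : SimpleGraph V}

lemma VertexTransitive.card_filter_apply_eq [Fintype (G ≃g G)] (hvt : VertexTransitive G)
    (v x y : V) : #{g : G ≃g G | g v = x} = #{g : G ≃g G | g v = y} := by
  obtain ⟨h, rfl⟩ := hvt x y
  refine card_nbij' (h * ·) (h⁻¹ * ·) ?_ ?_ (fun g _ => inv_mul_cancel_left h g)
    (fun g _ => mul_inv_cancel_left h g) <;>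
  · intro g hg
    simp_all [RelIso.mul_apply]

lemma VertexTransitive.card_mul_card_filter_apply_mem [Fintype V] [Fintype (G ≃g G)]
    (hvt : VertexTransitive G) (v : V) (X : Finset V) :
    Fintype.card V * #{g : G ≃g G | g v ∈ X} = Fintype.card (G ≃g G) * #X := by
  have hfib : ∀ Y : Finset V, #{g : G ≃g G | g v ∈ Y} = #Y * #{g : G ≃g G | g v = v} := by
    intro Y
    rw [← sum_card_fiberwise_eq_card_filter,
      sum_congr rfl fun x _ => hvt.card_filter_apply_eq v x v, sum_const, smul_eq_mul]
  have hall := hfib univ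
  simp only [mem_univ, filter_true, card_univ] at hall
  rw [hfib X, hall]
  ring

lemma VertexTransitive.isExactCover [Fintype V] {W : Type} [Fintype W] {K : SimpleGraph W}
    (hvt : VertexTransitive G) {X : Finset V} (hcov : KCover K G X)
    (hcard : Fintype.card V = Fintype.card W * #X) : IsExactCover K G X := by
  have := finite_iso_self G
  let := Fintype.ofFinite (G ≃g G)
  intro f hf
  obtain ⟨w₀, -⟩ := hcov f hf
  -- every copy `g ∘ f` meets `X`, and on average over `g ∈ Aut G` it meets `X` once
  set hits : (G ≃g G) → ℕ := fun g => #{w | g (f w) ∈ X}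
  have hpos : ∀ g, 1 ≤ hits g := fun g => by
    obtain ⟨w, hw⟩ := hcov (g.toHom.comp f) (g.injective.comp hf)
    exact card_pos.mpr ⟨w, mem_filter.mpr ⟨mem_univ _, hw⟩⟩
  have hsum : ∑ g, hits g = Fintype.card (G ≃g G) := by
    have hdouble : ∑ g, hits g = ∑ w, #{g : G ≃g G | g (f w) ∈ X} :=
      sum_card_bipartiteAbove_eq_sum_card_bipartiteBelow _
    refine Nat.eq_of_mul_eq_mul_left (Fintype.card_pos_iff.mpr ⟨f w₀⟩) ?_
    rw [hdouble, mul_sum, sum_congr rfl fun w _ => hvt.card_mul_card_filter_apply_mem (f w) X,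
      sum_const, card_univ, smul_eq_mul, hcard]
    ring
  have hone : ∀ g ∈ univ, 1 = hits g :=
    (sum_eq_sum_iff_of_le fun g _ => hpos g).mp (by simp [hsum])
  rw [Fintype.existsUnique_iff_card_one]
  exact (hone 1 (mem_univ _)).symm

end Averaging

section Copies

variable {V : Type} {G : SimpleGraph V} {n : ℕ}

lemma srGraph_adj_zero {i : Fin (n + 2)} (h1 : 1 ≤ i.val) (h2 : i.val ≤ n) :
    (srGraph n).Adj 0 i := by
  rw [srGraph, fromRel_adj]
  exact ⟨fun h => by simp [← h] at h1, Or.inl (Or.inl ⟨rfl, h1, h2⟩)⟩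

lemma le_degree_of_injective_srGraph [Fintype V] [DecidableRel G.Adj] {f : srGraph n →g G}
    (hf : Injective f) : n ≤ G.degree (f 0) := by
  let leaf : Fin n → V := fun i => f ⟨i.val + 1, by omega⟩
  have hmaps : Set.MapsTo leaf (univ : Finset (Fin n)) (G.neighborFinset (f 0)) := fun i _ => by
    simpa using f.map_adj (srGraph_adj_zero (i := ⟨i.val + 1, by omega⟩) (by simp) (by simp))
  have hinj : Set.InjOn leaf (univ : Finset (Fin n)) := fun i _ j _ h => by
    simpa [Fin.ext_iff] using hf h
  simpa using card_le_card_of_injOn leaf hmaps hinj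

lemma exists_srGraph_copy [DecidableEq V] {u w l : V} {L : Finset V} (hL : #L = n)
    (hu : ∀ x ∈ L, G.Adj u x) (hl : l ∈ L) (hlw : G.Adj l w) (hwu : w ≠ u) (hwL : w ∉ L) :
    ∃ f : srGraph n →g G, Injective f ∧ ∀ v, v ∈ Set.range f ↔ v = u ∨ v = w ∨ v ∈ L := by
  have hn : 1 ≤ n := hL ▸ card_pos.mpr ⟨l, hl⟩
  have huL : u ∉ L := fun h => G.loopless.irrefl u (hu u h)
  let eL := L.equivFinOfCardEq hL
  let σ : Fin n ≃ L := (Equiv.swap (eL ⟨l, hl⟩) ⟨n - 1, by omega⟩).trans eL.symm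
  have hσl : (σ ⟨n - 1, by omega⟩ : V) = l := by simp [σ]
  let e : Fin (n + 2) → V := fun k =>
    if k.val = 0 then u else if h : k.val ≤ n then σ ⟨k.val - 1, by omega⟩ else w
  have he0 : ∀ k : Fin (n + 2), k.val = 0 → e k = u := fun _ hk => if_pos hk
  have heL : ∀ (k : Fin (n + 2)) (h1 : 1 ≤ k.val) (h2 : k.val ≤ n),
      e k = σ ⟨k.val - 1, by omega⟩ := fun _ h1 h2 => (if_neg (by omega)).trans (dif_pos h2)
  have hen : ∀ k : Fin (n + 2), k.val = n → e k = l := by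
    rintro ⟨k, hk⟩ (rfl : k = n)
    exact (heL _ hn le_rfl).trans hσl
  have heT : ∀ k : Fin (n + 2), k.val = n + 1 → e k = w := fun _ hk =>
    (if_neg (by omega)).trans (dif_neg (by omega))
  have hrange : ∀ v, v ∈ Set.range e ↔ v = u ∨ v = w ∨ v ∈ L := by
    intro v
    constructor
    · rintro ⟨k, rfl⟩
      by_cases h0 : k.val = 0
      · exact Or.inl (he0 k h0)
      by_cases hT : k.val = n + 1
      · exact Or.inr (Or.inl (heT k hT))
      · exact Or.inr (Or.inr (by rw [heL k (by omega) (by omega)]; exact Subtype.prop _))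
    · rintro (rfl | rfl | hv)
      · exact ⟨0, he0 0 rfl⟩
      · exact ⟨Fin.last _, heT _ rfl⟩
      · obtain ⟨j, hj⟩ := σ.surjective ⟨v, hv⟩
        refine ⟨⟨j.val + 1, by omega⟩, ?_⟩
        rw [heL _ (by simp) (by simp)]
        simp [hj]
  -- `e` hits all `n + 2` vertices of the star, hence it is injective
  have hinj : Injective e := by
    have himage : univ.image e = insert u (insert w L) := by
      ext v
      simpa [-Set.mem_range, Set.mem_range.symm] using hrange v
    have hcard : #(univ.image e) = #(univ : Finset (Fin (n + 2))) := by
      rw [himage, card_insert_of_notMem (by simp [hwu.symm, huL]),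
        card_insert_of_notMem hwL, hL, card_univ, Fintype.card_fin]
    simpa using card_image_iff.mp hcard
  refine ⟨⟨e, fun {a b} hab => ?_⟩, hinj, hrange⟩
  rw [srGraph, fromRel_adj] at hab
  obtain ⟨-, (⟨ha, hb1, hb2⟩ | ⟨ha, hb⟩) | (⟨hb, ha1, ha2⟩ | ⟨hb, ha⟩)⟩ := hab
  · rw [he0 a ha, heL b hb1 hb2]
    exact hu _ (Subtype.prop _)
  · rw [hen a ha, heT b hb]
    exact hlw
  · rw [he0 b hb, heL a ha1 ha2]
    exact (hu _ (Subtype.prop _)).symm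
  · rw [heT a ha, hen b hb]
    exact hlw.symm

end Copies

def HasVertexAtDistTwo {V : Type} (G : SimpleGraph V) (u : V) : Prop :=
  ∃ l w, G.Adj u l ∧ G.Adj l w ∧ w ≠ u ∧ ¬ G.Adj u w

def IsTwoPacking {V : Type} (G : SimpleGraph V) (X : Set V) : Prop :=
  ∀ ⦃u x y : V⦄, x ∈ X → y ∈ X → (x = u ∨ G.Adj u x) → (y = u ∨ G.Adj u y) → x = y

/-- Each neighbour of `u` has at most one neighbour outside the closed neighbourhood of `u`. -/
def HasUniqueOuterNeighbours {V : Type} (G : SimpleGraph V) (u : V) : Prop :=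
  ∀ ⦃l y z : V⦄, G.Adj u l → G.Adj l y → G.Adj l z → ¬ (y = u ∨ G.Adj u y) →
    ¬ (z = u ∨ G.Adj u z) → y = z

lemma HasUniqueOuterNeighbours.map {V : Type} {G : SimpleGraph V} {u : V}
    (h : HasUniqueOuterNeighbours G u) (g : G ≃g G) : HasUniqueOuterNeighbours G (g u) := by
  intro l y z hl hy hz hy' hz'
  have key : ∀ a b, G.Adj (g.symm a) (g.symm b) ↔ G.Adj a b := fun a b => g.symm.map_adj_iff
  have hu : g.symm (g u) = u := g.symm_apply_apply u
  refine g.symm.injective (h (l := g.symm l) ?_ ?_ ?_ ?_ ?_)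
  · rwa [← hu, key]
  · rwa [key]
  · rwa [key]
  · rwa [← hu, key, g.symm.injective.eq_iff]
  · rwa [← hu, key, g.symm.injective.eq_iff]

section ExactCover

variable {V : Type} [DecidableEq V] {G : SimpleGraph V} {n : ℕ} {X : Finset V}

lemma IsExactCover.existsUnique_star (hX : IsExactCover (srGraph n) G X) {u w l : V}
    {L : Finset V} (hL : #L = n) (hu : ∀ x ∈ L, G.Adj u x) (hl : l ∈ L) (hlw : G.Adj l w)
    (hwu : w ≠ u) (hwL : w ∉ L) : ∃! v, (v = u ∨ v = w ∨ v ∈ L) ∧ v ∈ X := by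
  obtain ⟨f, hf, hrange⟩ := exists_srGraph_copy hL hu hl hlw hwu hwL
  obtain ⟨k, hk, huniq⟩ := hX f hf
  refine ⟨f k, ⟨(hrange _).mp ⟨k, rfl⟩, hk⟩, ?_⟩
  rintro v ⟨hv, hvX⟩
  obtain ⟨k', rfl⟩ := (hrange v).mpr hv
  rw [huniq k' hvX]

variable [Fintype V]

lemma IsExactCover.hasVertexAtDistTwo (hX : IsExactCover (srGraph n) G X) (hn : 1 ≤ n)
    (hconn : G.Connected) (hvt : VertexTransitive G) {x y : V} (hx : x ∈ X) (hy : y ∈ X)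
    (hxy : x ≠ y) (hcard : n + 3 ≤ Fintype.card V) (u : V) : HasVertexAtDistTwo G u := by
  by_contra hfar
  -- otherwise `G` is complete, and some copy of `sr_n` passes through both `x` and `y`
  have huniv : ∀ v, G.IsUniversal v := hvt.isUniversal <| hconn.isUniversal fun l w hul hlw hwu =>
    by_contra fun huw => hfar ⟨l, w, hul, hlw, hwu, huw⟩
  obtain ⟨w, -, hw⟩ := exists_mem_notMem_of_card_lt_card (s := {x, y}) (t := univ)
    (card_le_two.trans_lt (by rw [card_univ]; omega))
  simp only [mem_insert, mem_singleton, not_or] at hw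
  obtain ⟨L, hyL, hLsub, hL⟩ := exists_subsuperset_card_eq (s := {y})
    (t := (univ.erase x).erase w) (by simp [Ne.symm hxy, Ne.symm hw.2]) (by simpa using hn)
    (by rw [card_erase_of_mem (by simp [hw.1]), card_erase_of_mem (mem_univ _), card_univ]; omega)
  have hLx : ∀ z ∈ L, z ≠ x ∧ z ≠ w := fun z hz => by
    have := hLsub hz
    simp only [mem_erase] at this
    exact ⟨this.2.1, this.1⟩
  have hyL : y ∈ L := singleton_subset_iff.mp hyL
  exact hxy ((hX.existsUnique_star hL (fun z hz => huniv x (hLx z hz).1.symm) hyL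
    (huniv y fun h => hw.2 h.symm) hw.1 fun h => (hLx w h).2 rfl).unique
    ⟨Or.inl rfl, hx⟩ ⟨Or.inr (Or.inr hyL), hy⟩)

variable [DecidableRel G.Adj]

lemma IsExactCover.eq_of_mem_star (hX : IsExactCover (srGraph n) G X) {u w l : V}
    {S : Finset V} (hdeg : n ≤ G.degree u) (hS : S ⊆ G.neighborFinset u) (hSn : #S ≤ n)
    (hl : l ∈ S) (hlw : G.Adj l w) (hwu : w ≠ u) (huw : ¬ G.Adj u w) {x y : V}
    (hx : x = u ∨ x = w ∨ x ∈ S) (hy : y = u ∨ y = w ∨ y ∈ S) (hxX : x ∈ X) (hyX : y ∈ X) :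
    x = y := by
  obtain ⟨L, hSL, hLN, hL⟩ := exists_subsuperset_card_eq hS hSn hdeg
  have hmem : ∀ z, z = u ∨ z = w ∨ z ∈ S → z = u ∨ z = w ∨ z ∈ L := by
    rintro z (h | h | h)
    exacts [Or.inl h, Or.inr (Or.inl h), Or.inr (Or.inr (hSL h))]
  refine (hX.existsUnique_star hL (fun z hz => (mem_neighborFinset _ _ _).mp (hLN hz))
    (hSL hl) hlw hwu fun h => huw ((mem_neighborFinset _ _ _).mp (hLN h))).unique
    ⟨hmem x hx, hxX⟩ ⟨hmem y hy, hyX⟩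

lemma IsExactCover.isTwoPacking (hX : IsExactCover (srGraph n) G X) (hn : 3 ≤ n)
    (hdeg : ∀ u, n ≤ G.degree u) (hdist : ∀ u, HasVertexAtDistTwo G u) :
    IsTwoPacking G X := by
  intro u x y hxX hyX hx hy
  obtain ⟨l, w, hul, hlw, hwu, huw⟩ := hdist u
  let S := ({x, y, l} : Finset V).filter (G.Adj u)
  refine hX.eq_of_mem_star (hdeg u) (S := S) (fun z hz => ?_) ((card_filter_le _ _).trans
    (card_le_three.trans hn)) (by simp [S, hul]) hlw hwu huw ?_ ?_ hxX hyX
  · simpa [S] using (mem_filter.mp hz).2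
  · rcases hx with rfl | hx
    · exact Or.inl rfl
    · exact Or.inr (Or.inr (by simp [S, hx]))
  · rcases hy with rfl | hy
    · exact Or.inl rfl
    · exact Or.inr (Or.inr (by simp [S, hy]))

lemma IsTwoPacking.card_biUnion {d : ℕ} (hX : IsTwoPacking G X) (hreg : G.IsRegularOfDegree d) :
    #(X.biUnion fun x => insert x (G.neighborFinset x)) = #X * (d + 1) := by
  have hdisj : (X : Set V).PairwiseDisjoint fun x => insert x (G.neighborFinset x) := by
    intro x hx y hy hxy
    refine disjoint_left.mpr fun z hzx hzy => hxy (hX (u := z) hx hy ?_ ?_) <;>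
      simp only [mem_insert, mem_neighborFinset] at hzx hzy
    · exact hzx.imp Eq.symm Adj.symm
    · exact hzy.imp Eq.symm Adj.symm
  rw [Finset.card_biUnion hdisj, sum_const_nat fun x _ => ?_]
  rw [card_insert_of_notMem (by simp), card_neighborFinset_eq_degree, hreg x]

lemma IsExactCover.eq_of_adj_adj_adj (hX : IsExactCover (srGraph n) G X) (hn : 3 ≤ n)
    (hdeg : ∀ u, n ≤ G.degree u) (hdist : ∀ u, HasVertexAtDistTwo G u) {x a b y : V}
    (hxa : G.Adj x a) (hab : G.Adj a b) (hby : G.Adj b y) (hxX : x ∈ X) (hyX : y ∈ X) :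
    x = y := by
  have hpack := hX.isTwoPacking hn hdeg hdist
  by_cases hbx : b = x
  · subst hbx
    exact hpack hxX hyX (Or.inr hby.symm) (Or.inl rfl)
  by_cases hxb : G.Adj b x
  · exact hpack hxX hyX (Or.inr hxb) (Or.inr hby)
  -- the star at `b` with leaves `a`, `y` and the tail `x` hanging from `a`
  refine hX.eq_of_mem_star (hdeg b) (S := {a, y}) ?_ (card_le_two.trans (by omega))
    (mem_insert_self a {y}) hxa.symm (Ne.symm hbx) hxb (Or.inr (Or.inl rfl))
    (Or.inr (Or.inr (by simp))) hxX hyX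
  intro z hz
  simp only [mem_insert, mem_singleton] at hz
  rcases hz with rfl | rfl
  exacts [(mem_neighborFinset _ _ _).mpr hab.symm, (mem_neighborFinset _ _ _).mpr hby]

lemma IsExactCover.card_le_of_isRegularOfDegree_succ (hX : IsExactCover (srGraph n) G X)
    (hn : 3 ≤ n) (hconn : G.Connected) (hreg : G.IsRegularOfDegree (n + 1))
    (hdist : ∀ u, HasVertexAtDistTwo G u) {x₀ : V} (hx₀ : x₀ ∈ X)
    (hV : Fintype.card V = #X * (n + 2)) : Fintype.card V ≤ n + 2 := by
  have hdeg : ∀ u, n ≤ G.degree u := fun u => by rw [hreg u]; omega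
  have hpack := hX.isTwoPacking hn hdeg hdist
  -- the closed neighbourhoods of `X` partition `V`, and adjacent vertices lie in the same one
  have hcover : X.biUnion (fun x => insert x (G.neighborFinset x)) = univ :=
    eq_univ_of_card _ (by rw [hpack.card_biUnion hreg, hV])
  have hclosed : ∀ a ∈ insert x₀ (G.neighborFinset x₀), ∀ b, G.Adj a b →
      b ∈ insert x₀ (G.neighborFinset x₀) := by
    intro a ha b hab
    obtain ⟨y, hy, hby⟩ := mem_biUnion.mp (hcover ▸ mem_univ b)
    simp only [mem_insert, mem_neighborFinset] at ha hby ⊢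
    have hxy : x₀ = y := by
      rcases ha with rfl | ha <;> rcases hby with rfl | hby
      · exact hpack hx₀ hy (Or.inl rfl) (Or.inr hab)
      · exact hpack hx₀ hy (Or.inr hab.symm) (Or.inr hby.symm)
      · exact hpack hx₀ hy (Or.inr ha.symm) (Or.inr hab)
      · exact hX.eq_of_adj_adj_adj hn hdeg hdist ha hab hby.symm hx₀ hy
    subst hxy
    exact hby
  calc Fintype.card V ≤ #(insert x₀ (G.neighborFinset x₀)) :=
        hconn.card_le_of_forall_adj_mem hclosed (mem_insert_self _ _)
    _ = n + 2 := by rw [card_insert_of_notMem (by simp), card_neighborFinset_eq_degree, hreg]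

lemma IsExactCover.eq_or_adj_or_mem (hX : IsExactCover (srGraph n) G X) {v : V}
    (hv : G.degree v = n) (hvX : v ∉ X) (hvadj : ∀ x ∈ X, ¬ G.Adj v x) {l w : V}
    (hvl : G.Adj v l) (hlw : G.Adj l w) : w = v ∨ G.Adj v w ∨ w ∈ X := by
  by_contra! h
  obtain ⟨z, ⟨hz, hzX⟩, -⟩ := hX.existsUnique_star (L := G.neighborFinset v)
    (by rw [card_neighborFinset_eq_degree, hv]) (fun x hx => (mem_neighborFinset _ _ _).mp hx)
    ((mem_neighborFinset _ _ _).mpr hvl) hlw h.1 fun h' => h.2.1 ((mem_neighborFinset _ _ _).mp h')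
  rcases hz with rfl | rfl | hz
  · exact hvX hzX
  · exact h.2.2 hzX
  · exact hvadj z hzX ((mem_neighborFinset _ _ _).mp hz)

lemma IsExactCover.hasUniqueOuterNeighbours (hX : IsExactCover (srGraph n) G X)
    (hpack : IsTwoPacking G X) {v : V} (hv : G.degree v = n) (hvX : v ∉ X)
    (hvadj : ∀ x ∈ X, ¬ G.Adj v x) : HasUniqueOuterNeighbours G v := by
  intro l y z hl hy hz hy' hz'
  have hyX := (or_assoc.mpr (hX.eq_or_adj_or_mem hv hvX hvadj hl hy)).resolve_left hy'
  have hzX := (or_assoc.mpr (hX.eq_or_adj_or_mem hv hvX hvadj hl hz)).resolve_left hz'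
  exact hpack hyX hzX (Or.inr hy) (Or.inr hz)

lemma IsTwoPacking.neighborFinset_subset (hpack : IsTwoPacking G X) (hn : 3 ≤ n)
    (hreg : G.IsRegularOfDegree n) (hP : ∀ u, HasUniqueOuterNeighbours G u) {v a x : V}
    (hv : ∀ l w, G.Adj v l → G.Adj l w → w = v ∨ G.Adj v w ∨ w ∈ X)
    (hva : G.Adj v a) (hax : G.Adj a x) (hxX : x ∈ X) (hvx : ¬ G.Adj v x) :
    G.neighborFinset x ⊆ G.neighborFinset v := by
  have hfar : ∀ z c, G.Adj v z → G.Adj x c → ¬ G.Adj v c → ¬ G.Adj z c := by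
    intro z c hvz hxc hvc hzc
    rcases hv z c hvz hzc with rfl | h | hcX
    · exact hvx hxc.symm
    · exact hvc h
    · exact G.loopless.irrefl x (hpack hcX hxX (Or.inl rfl) (Or.inr hxc.symm) ▸ hxc)
  intro c hc
  rw [mem_neighborFinset] at hc ⊢
  by_contra hvc
  -- applied at `a`, `hP` makes `c` the only neighbour of `x` outside `N(v)`
  have hunique : ∀ c', G.Adj x c' → ¬ G.Adj v c' → c' = c := fun c' hxc' hvc' =>
    hP a hax hxc' hc (fun h => h.elim (fun h => hvc' (h ▸ hva)) (hfar a c' hva hxc' hvc'))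
      (fun h => h.elim (fun h => hvc (h ▸ hva)) (hfar a c hva hc hvc))
  obtain ⟨z, hcz, hxz⟩ : ∃ z, G.Adj c z ∧ G.Adj x z := by
    have hcard : 1 < #((G.neighborFinset c).erase x) := by
      rw [card_erase_of_mem ((mem_neighborFinset _ _ _).mpr hc.symm),
        card_neighborFinset_eq_degree, hreg]
      omega
    obtain ⟨y₁, hy₁, y₂, hy₂, hne⟩ := one_lt_card.mp hcard
    simp only [mem_erase, mem_neighborFinset] at hy₁ hy₂
    by_contra! hno
    exact hne (hP x hc hy₁.2 hy₂.2 (not_or.mpr ⟨hy₁.1, hno y₁ hy₁.2⟩)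
      (not_or.mpr ⟨hy₂.1, hno y₂ hy₂.2⟩))
  have hvz : G.Adj v z := by
    by_contra hvz
    exact G.loopless.irrefl c (hunique z hxz hvz ▸ hcz)
  exact hfar z c hvz hc hvc hcz.symm

lemma IsExactCover.card_le_of_isRegularOfDegree (hX : IsExactCover (srGraph n) G X)
    (hn : 3 ≤ n) (hconn : G.Connected) (hvt : VertexTransitive G)
    (hreg : G.IsRegularOfDegree n) (hdist : ∀ u, HasVertexAtDistTwo G u)
    (hV : #X * (n + 1) < Fintype.card V) : Fintype.card V ≤ n + 2 := by
  have hpack := hX.isTwoPacking hn (fun u => (hreg u).ge) hdist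
  obtain ⟨v, -, hvU⟩ := exists_mem_notMem_of_card_lt_card
    (s := X.biUnion fun x => insert x (G.neighborFinset x)) (t := univ)
    (by rw [hpack.card_biUnion hreg, card_univ]; exact hV)
  simp only [mem_biUnion, mem_insert, mem_neighborFinset, not_exists, not_and, not_or] at hvU
  have hvX : v ∉ X := fun h => (hvU v h).1 rfl
  have hvadj : ∀ x ∈ X, ¬ G.Adj v x := fun x hx h => (hvU x hx).2 h.symm
  -- no vertex of `X` lies within distance one of `v`, so those at distance two all do
  have hv : ∀ l w, G.Adj v l → G.Adj l w → w = v ∨ G.Adj v w ∨ w ∈ X :=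
    fun _ _ => hX.eq_or_adj_or_mem (hreg v) hvX hvadj
  have hP : ∀ u, HasUniqueOuterNeighbours G u := fun u => by
    obtain ⟨g, rfl⟩ := hvt v u
    exact (hX.hasUniqueOuterNeighbours hpack (hreg v) hvX hvadj).map g
  obtain ⟨a, x, hva, hax, hxv, hvx⟩ := hdist v
  have hxX : x ∈ X := ((hv a x hva hax).resolve_left hxv).resolve_left hvx
  have hN : G.neighborFinset x = G.neighborFinset v :=
    eq_of_subset_of_card_le (hpack.neighborFinset_subset hn hreg hP hv hva hax hxX hvx)
      (by rw [card_neighborFinset_eq_degree, card_neighborFinset_eq_degree, hreg, hreg])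
  have hclosed : ∀ c ∈ insert v (insert x (G.neighborFinset v)), ∀ b, G.Adj c b →
      b ∈ insert v (insert x (G.neighborFinset v)) := by
    intro c hc b hcb
    have hxc : c ∈ G.neighborFinset v → G.Adj x c := fun h => by
      rwa [← hN, mem_neighborFinset] at h
    simp only [mem_insert, mem_neighborFinset] at hc hxc ⊢
    rcases hc with rfl | rfl | hc
    · exact Or.inr (Or.inr hcb)
    · rw [← mem_neighborFinset, ← hN, mem_neighborFinset]
      exact Or.inr (Or.inr hcb)
    · rcases hv c b hc hcb with rfl | h | hbX
      exacts [Or.inl rfl, Or.inr (Or.inr h),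
        Or.inr (Or.inl (hpack hbX hxX (Or.inr hcb) (Or.inr (hxc hc).symm)))]
  calc Fintype.card V ≤ #(insert v (insert x (G.neighborFinset v))) :=
        hconn.card_le_of_forall_adj_mem hclosed (mem_insert_self _ _)
    _ ≤ n + 2 := by
      grw [card_insert_le, card_insert_le, card_neighborFinset_eq_degree, hreg v]

theorem IsExactCover.card_eq_one (hX : IsExactCover (srGraph n) G X) (hn : 3 ≤ n)
    (hconn : G.Connected) (hvt : VertexTransitive G) {f : srGraph n →g G} (hf : Injective f)
    (hV : Fintype.card V = (n + 2) * #X) : #X = 1 := by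
  obtain ⟨k, hk, -⟩ := hX f hf
  by_contra hX1
  have hX2 : 1 < #X := lt_of_le_of_ne (card_pos.mpr ⟨_, hk⟩) (Ne.symm hX1)
  obtain ⟨x, hx, y, hy, hxy⟩ := one_lt_card.mp hX2
  have hreg := hvt.isRegularOfDegree (f 0)
  have hnd : n ≤ G.degree (f 0) := le_degree_of_injective_srGraph hf
  have hdist := hX.hasVertexAtDistTwo (by omega) hconn hvt hx hy hxy (by nlinarith)
  have hpack := hX.isTwoPacking hn (fun u => hreg u ▸ hnd) hdist
  have hU := card_le_univ (X.biUnion fun x => insert x (G.neighborFinset x))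
  rw [hpack.card_biUnion hreg, hV] at hU
  rcases (show G.degree (f 0) = n ∨ G.degree (f 0) = n + 1 by
    have := Nat.le_of_mul_le_mul_left (by linarith : #X * (G.degree (f 0) + 1) ≤ #X * (n + 2))
      (by omega : 0 < #X)
    omega) with hd | hd <;> rw [hd] at hreg
  · have := hX.card_le_of_isRegularOfDegree hn hconn hvt hreg hdist (by rw [hV]; nlinarith)
    nlinarith
  · have := hX.card_le_of_isRegularOfDegree_succ hn hconn hreg hdist hx (by rw [hV]; ring)
    nlinarith

end ExactCover

section CompleteEquipartite

lemma vertexTransitive_completeEquipartiteGraph (r t : ℕ) :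
    VertexTransitive (completeEquipartiteGraph r t) := fun u v =>
  ⟨⟨Equiv.prodCongr (Equiv.swap u.1 v.1) (Equiv.swap u.2 v.2), by simp⟩, by ext <;> simp⟩

lemma connected_completeEquipartiteGraph {r t : ℕ} (hr : 2 ≤ r) (ht : 0 < t) :
    (completeEquipartiteGraph r t).Connected := by
  have : Nontrivial (Fin r) := Fin.nontrivial_iff_two_le.mpr hr
  have : Nonempty (Fin t) := ⟨⟨0, ht⟩⟩
  refine (connected_iff _).mpr ⟨fun u v => ?_, inferInstance⟩
  by_cases huv : u.1 = v.1
  · obtain ⟨i, hi⟩ := exists_ne u.1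
    have hu : (completeEquipartiteGraph r t).Adj u (i, u.2) := Ne.symm hi
    have hv : (completeEquipartiteGraph r t).Adj (i, u.2) v := by
      rw [completeEquipartiteGraph_adj, ← huv]
      exact hi
    exact hu.reachable.trans hv.reachable
  · exact Adj.reachable huv

variable {V : Type} {G : SimpleGraph V}

lemma nonempty_iso_completeEquipartiteGraph [Fintype V] {β : Type} [DecidableEq β] (π : V → β)
    {t : ℕ} (hfib : ∀ v, Fintype.card {w // π w = π v} = t)
    (hadj : ∀ a b, G.Adj a b ↔ π a ≠ π b) :
    Nonempty (G ≃g completeEquipartiteGraph (Fintype.card (Set.range π)) t) := by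
  let ρ := Set.rangeFactorization π
  have hfib' : ∀ p, Fintype.card {w // ρ w = p} = t := by
    rintro ⟨_, v, rfl⟩
    rw [← hfib v]
    exact Fintype.card_congr (Equiv.subtypeEquivRight fun w => Subtype.ext_iff)
  let e : V ≃ Fin (Fintype.card (Set.range π)) × Fin t :=
    (Equiv.sigmaFiberEquiv ρ).symm.trans <|
      (Equiv.sigmaCongrRight fun p => Fintype.equivFinOfCardEq (hfib' p)).trans <|
      (Equiv.sigmaEquivProd _ _).trans (Equiv.prodCongr (Fintype.equivFin _) (Equiv.refl _))
  have he : ∀ v, (e v).1 = Fintype.equivFin _ (ρ v) := fun v => rfl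
  refine ⟨⟨e, fun {a b} => ?_⟩⟩
  rw [completeEquipartiteGraph_adj, he, he, (Fintype.equivFin _).injective.ne_iff, hadj]
  exact Subtype.ext_iff.not

variable [Fintype V] [DecidableEq V] [DecidableRel G.Adj]

lemma neighborFinset_eq_iff_not_adj (hreg : G.IsRegularOfDegree (Fintype.card V - 2))
    {v w : V} : G.neighborFinset v = G.neighborFinset w ↔ ¬ G.Adj v w := by
  refine ⟨fun h hvw => ?_, fun h => ?_⟩
  · have hw : w ∈ G.neighborFinset w := h ▸ (mem_neighborFinset _ _ _).mpr hvw
    simp at hw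
  by_cases hvw : v = w
  · rw [hvw]
  have key : ∀ a b, a ≠ b → ¬ G.Adj a b → G.neighborFinset a = (univ.erase a).erase b := by
    intro a b hab hnab
    refine eq_of_subset_of_card_le (fun x hx => ?_) ?_
    · rw [mem_neighborFinset] at hx
      simp only [mem_erase, mem_univ, and_true]
      exact ⟨fun h => hnab (h ▸ hx), (G.ne_of_adj hx).symm⟩
    · rw [card_erase_of_mem (by simp [Ne.symm hab]), card_erase_of_mem (mem_univ _), card_univ,
        card_neighborFinset_eq_degree, hreg]
      omega
  rw [key v w hvw h, key w v (Ne.symm hvw) fun h' => h h'.symm, erase_right_comm]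

lemma exists_iso_completeEquipartiteGraph (hreg : G.IsRegularOfDegree (Fintype.card V - 2))
    (hV : 2 ≤ Fintype.card V) : ∃ k, Nonempty (G ≃g completeEquipartiteGraph k 2) := by
  refine ⟨_, nonempty_iso_completeEquipartiteGraph (fun v => G.neighborFinset v)
    (fun v => ?_) fun a b => (neighborFinset_eq_iff_not_adj hreg).not_left.symm⟩
  simp_rw [neighborFinset_eq_iff_not_adj hreg, adj_comm]
  have hdeg : Fintype.card {x // G.Adj v x} = Fintype.card V - 2 :=
    (card_neighborSet_eq_degree G v).trans (hreg v)
  rw [Fintype.card_subtype_compl, hdeg]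
  omega

end CompleteEquipartite

lemma kPrime_adj {m : ℕ} {x y : Fin m} : (kPrime m).Adj x y ↔ x.val / 2 ≠ y.val / 2 := by
  rw [kPrime, fromRel_adj]
  exact ⟨fun ⟨_, h⟩ => h.elim id Ne.symm, fun h => ⟨fun hxy => h (hxy ▸ rfl), Or.inl h⟩⟩

lemma nonempty_kPrime_iso {m k : ℕ} (h : m = k * 2) :
    Nonempty (kPrime m ≃g completeEquipartiteGraph k 2) := by
  subst h
  refine ⟨⟨finProdFinEquiv.symm, fun {x y} => ?_⟩⟩
  simp [kPrime_adj, Fin.ext_iff, Fin.coe_divNat]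

lemma exists_srGraph_copy_kPrime {n : ℕ} (hn : 1 ≤ n) :
    ∃ f : srGraph n →g kPrime (n + 2), Injective f := by
  have hL : #(univ \ {0, 1} : Finset (Fin (n + 2))) = n := by
    rw [card_univ_sdiff, card_pair (by simp), Fintype.card_fin]
    omega
  have hu : ∀ x ∈ (univ \ {0, 1} : Finset (Fin (n + 2))), (kPrime (n + 2)).Adj 0 x := by
    intro x hx
    simp only [mem_sdiff, mem_univ, mem_insert, mem_singleton, true_and, not_or, Fin.ext_iff,
      Fin.val_zero, Fin.val_one] at hx
    rw [kPrime_adj, Fin.val_zero, Nat.zero_div]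
    omega
  obtain ⟨f, hf, -⟩ := exists_srGraph_copy (u := 0) (w := 1) (l := ⟨2, by omega⟩) hL hu
    (by simp [Fin.ext_iff]) (kPrime_adj.mpr (by simp)) (by simp) (by simp)
  exact ⟨f, hf⟩

theorem nonempty_iso_top_or_kPrime {n : ℕ} (hn : 3 ≤ n) {V : Type} [Fintype V]
    {G : SimpleGraph V} (hconn : G.Connected) (hvt : VertexTransitive G)
    (heq : upsilonSym (srGraph n) G = (n + 2) * upsilon (srGraph n) G)
    (hpos : 0 < upsilonSym (srGraph n) G) :
    Nonempty (G ≃g (⊤ : SimpleGraph (Fin (n + 2)))) ∨ Nonempty (G ≃g kPrime (n + 2)) := by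
  classical
  obtain ⟨f, hf⟩ := exists_injective_hom_of_upsilonSym_pos hpos
  obtain ⟨Xs, hXfin, hXcard, hcov⟩ := exists_kCover_card_eq_upsilon (K := srGraph n) (G := G)
  have hV : Fintype.card V = (n + 2) * #hXfin.toFinset := by
    rw [← Nat.card_eq_fintype_card, ← hvt.upsilonSym_eq_card hf, heq, ← hXcard,
      Nat.card_eq_card_finite_toFinset hXfin]
  have hX := hvt.isExactCover (X := hXfin.toFinset) (by simpa using hcov)
    (by rw [hV, Fintype.card_fin])
  have hcard : Fintype.card V = n + 2 := by rw [hV, hX.card_eq_one hn hconn hvt hf hV, mul_one]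
  have hreg := hvt.isRegularOfDegree (f 0)
  have hnd := le_degree_of_injective_srGraph hf
  have hlt := G.degree_lt_card_verts (f 0)
  rcases (show G.degree (f 0) = n ∨ G.degree (f 0) = n + 1 by omega) with hd | hd
  · obtain ⟨k, ⟨e⟩⟩ := exists_iso_completeEquipartiteGraph (G := G)
      (by rw [hcard, show n + 2 - 2 = G.degree (f 0) by omega]; exact hreg) (by omega)
    obtain ⟨e'⟩ := nonempty_kPrime_iso (m := n + 2) (k := k) (by
      rw [← hcard, Fintype.card_congr e.toEquiv, Fintype.card_prod, Fintype.card_fin,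
        Fintype.card_fin])
    exact Or.inr ⟨e.trans e'.symm⟩
  · have huniv : ∀ v, G.IsUniversal v := fun v =>
      (G.degree_eq_card_sub_one v).mp (by rw [hreg v, hd, hcard]; rfl)
    have hG : G = ⊤ := by
      ext a b
      exact ⟨G.ne_of_adj, fun h => huniv a h⟩
    subst hG
    exact Or.inl ⟨Iso.completeGraph (Fintype.equivFinOfCardEq hcard)⟩

lemma upsilonSym_eq_of_vertexTransitive {n : ℕ} {H : SimpleGraph (Fin (n + 2))}
    (hvt : VertexTransitive H) {f : srGraph n →g H} (hf : Injective f) :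
    upsilonSym (srGraph n) H = (n + 2) * upsilon (srGraph n) H ∧ 0 < upsilonSym (srGraph n) H := by
  rw [hvt.upsilonSym_eq_card hf, upsilon_eq_one hf, Nat.card_eq_fintype_card, Fintype.card_fin]
  omega

/-- Part of Proposition 2.3 (even case): for even `n ≥ 4`, the only vertex-transitive
connected graphs `G` with `Υ_sym(sr_n, G) = (n+2)·Υ(sr_n, G) > 0` are `K_{n+2}` and
`K'_{n+2}`. -/
theorem stmt11 (n : ℕ) (hn : 4 ≤ n) (heven : Even n) :
    (∀ (V : Type) (_ : Fintype V) (G : SimpleGraph V),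
      G.Connected → VertexTransitive G →
      upsilonSym (srGraph n) G = (n + 2) * upsilon (srGraph n) G →
      0 < upsilonSym (srGraph n) G →
      Nonempty (G ≃g (⊤ : SimpleGraph (Fin (n + 2)))) ∨
        Nonempty (G ≃g kPrime (n + 2))) ∧
    ((⊤ : SimpleGraph (Fin (n + 2))).Connected ∧
      VertexTransitive (⊤ : SimpleGraph (Fin (n + 2))) ∧
      upsilonSym (srGraph n) (⊤ : SimpleGraph (Fin (n + 2)))
        = (n + 2) * upsilon (srGraph n) (⊤ : SimpleGraph (Fin (n + 2))) ∧
      0 < upsilonSym (srGraph n) (⊤ : SimpleGraph (Fin (n + 2)))) ∧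
    ((kPrime (n + 2)).Connected ∧
      VertexTransitive (kPrime (n + 2)) ∧
      upsilonSym (srGraph n) (kPrime (n + 2))
        = (n + 2) * upsilon (srGraph n) (kPrime (n + 2)) ∧
      0 < upsilonSym (srGraph n) (kPrime (n + 2))) := by
  obtain ⟨f, hf⟩ := exists_srGraph_copy_kPrime (n := n) (by omega)
  obtain ⟨m, hm⟩ := heven
  obtain ⟨e⟩ := nonempty_kPrime_iso (m := n + 2) (k := m + 1) (by omega)
  have hvtK : VertexTransitive (kPrime (n + 2)) :=
    (vertexTransitive_completeEquipartiteGraph _ _).of_iso e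
  refine ⟨fun V _ G hconn hvt heq hpos =>
    nonempty_iso_top_or_kPrime (by omega) hconn hvt heq hpos,
    ⟨connected_top, vertexTransitive_top, upsilonSym_eq_of_vertexTransitive vertexTransitive_top
      (f := (Hom.ofLE le_top).comp f) hf⟩,
    ⟨e.connected_iff.mpr (connected_completeEquipartiteGraph (by omega) (by omega)), hvtK,
      upsilonSym_eq_of_vertexTransitive hvtK hf⟩⟩
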